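/- arXiv:2106.03900 — 2 statements merged into one kernel-verified Lean document; each statement's English description precedes it below -/
import Mathlib

section
/- Let K be a field and A a sortable set of monomials of degree d in S = K[x_1,...,x_n]. Then the K-subalgebra K[A] of S generated by A is an integrally closed (normal) integral domain. -/
open MvPolynomial

/-- The sorting operator on pairs of monomials of the same degree in `K[x_1,…,x_n]`,
identified with their exponent vectors.  Writing `u*v = x_{i_1}⋯x_{i_{2d}}` with
`i_1 ≤ … ≤ i_{2d}`, the first component takes the variables in the odd positions and the
second component those in the even positions. -/
noncomputable def sortPair {n : ℕ} (u v : Fin n →₀ ℕ) :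
    (Fin n →₀ ℕ) × (Fin n →₀ ℕ) :=
  (Finsupp.equivFunOnFinite.symm fun i =>
      ((∑ j ∈ Finset.univ.filter (fun j => j ≤ i), (u j + v j)) + 1) / 2
        - ((∑ j ∈ Finset.univ.filter (fun j => j < i), (u j + v j)) + 1) / 2,
   Finsupp.equivFunOnFinite.symm fun i =>
      (∑ j ∈ Finset.univ.filter (fun j => j ≤ i), (u j + v j)) / 2
        - (∑ j ∈ Finset.univ.filter (fun j => j < i), (u j + v j)) / 2)

/-!
Write `P_k(m)` for the prefix sums `m_1 + ⋯ + m_k` of an exponent vector. Sorting a pair replaces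
`(P_k(u), P_k(v))` by the ceiling and the floor of their mean, and a multiset of monomials is
sorted when any two of them have prefix sums within one of each other. Repeatedly sorting pairs of
elements of `A` terminates (the squared prefix sums decrease, or stay while the total prefix sums
spread apart) in a sorted multiset, and a sorted multiset of `s` monomials with product `x^m` is
forced: its elements have prefix sums `⌈(P_k(m) - j) / s⌉` for `0 ≤ j < s`. The parts of `N • v`
are those of `v`, each repeated `N` times, so the monoid `ℕA` is normal: `N • v ∈ ℕA` and
`d ∣ deg v` give `v ∈ ℕA`.

Now let `f ∈ K[x]` be integral over `K[A]` with `q f ∈ K[A]` for some `q ≠ 0` in `K[A]`. Over the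
coefficient ring `K[t]` the substitution `x_i ↦ t_i x_i` preserves integrality and multiplies
distinct monomials by distinct scalars, so every monomial of `f` is integral up to a nonzero
coefficient, and a monic equation for `c x^v` puts a multiple `N • v` into `ℕA`. Comparing leading
monomials in `q f` gives `d ∣ deg v`, hence every monomial of `f` lies in `K[A]`.
-/

lemma Nat.sum_range_add_div (s x : ℕ) (hs : 0 < s) : ∑ j ∈ Finset.range s, (x + j) / s = x := by
  induction x with
  | zero => exact Finset.sum_eq_zero fun j hj => Nat.div_eq_of_lt (by simpa using hj)
  | succ x ih =>
    have hshift := Finset.sum_range_succ' (fun j => (x + j) / s) s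
    rw [Finset.sum_range_succ, Nat.add_div_right _ hs] at hshift
    simp only [add_zero, ← add_assoc] at hshift
    have := Nat.div_le_self x s
    simp only [add_right_comm x 1]
    omega

lemma Nat.sub_ceil_div_add_div {s o : ℕ} (ho : o < s) (x : ℕ) :
    (x - (x + s) / (s + 1) + o) / s = (x + o) / (s + 1) := by
  have small (a b : ℕ) (h : a < 2 * b) : a / b = if b ≤ a then 1 else 0 := by
    split_ifs with hb
    · exact Nat.div_eq_of_lt_le (by omega) (by omega)
    · exact Nat.div_eq_of_lt (by omega)
  obtain ⟨q, r, hr, rfl⟩ : ∃ q r, r ≤ s ∧ x = r + s * q + q :=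
    ⟨x / (s + 1), x % (s + 1), Nat.lt_succ_iff.mp (Nat.mod_lt _ (by omega)), by
      have := Nat.mod_add_div x (s + 1); rw [add_mul, one_mul] at this; omega⟩
  have hdiv (a : ℕ) : (r + s * q + q + a) / (s + 1) = (r + a) / (s + 1) + q := by
    rw [← Nat.add_mul_div_left _ _ (Nat.succ_pos s), Nat.succ_eq_add_one]; ring_nf
  rw [hdiv, hdiv, small (r + s) (s + 1) (by omega), small (r + o) (s + 1) (by omega)]
  have hsub : r + s * q + q - ((if s + 1 ≤ r + s then 1 else 0) + q) + o
      = (r + o - if s + 1 ≤ r + s then 1 else 0) + s * q := by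
    split_ifs <;> omega
  rw [hsub, Nat.add_mul_div_left _ _ (by omega), small _ s (by split_ifs <;> omega)]
  split_ifs <;> omega

lemma Nat.sq_add_sq_half_le (p q : ℕ) :
    ((p + q + 1) / 2) ^ 2 + ((p + q) / 2) ^ 2 ≤ p ^ 2 + q ^ 2 := by
  obtain ⟨hab, hab'⟩ : (p + q + 1) / 2 + (p + q) / 2 = p + q ∧
      ((p + q + 1) / 2 = (p + q) / 2 ∨ (p + q + 1) / 2 = (p + q) / 2 + 1 ∧ p ≠ q) := by omega
  generalize (p + q + 1) / 2 = a at *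
  generalize (p + q) / 2 = b at *
  rcases hab' with rfl | ⟨rfl, hpq⟩
  · nlinarith [sq_nonneg ((p : ℤ) - q)]
  · rcases Nat.lt_or_gt_of_ne hpq with h | h <;> nlinarith

lemma Nat.sq_add_sq_half_lt {p q : ℕ} (h : p + 2 ≤ q ∨ q + 2 ≤ p) :
    ((p + q + 1) / 2) ^ 2 + ((p + q) / 2) ^ 2 < p ^ 2 + q ^ 2 := by
  obtain ⟨hab, hab'⟩ : (p + q + 1) / 2 + (p + q) / 2 = p + q ∧
      ((p + q + 1) / 2 = (p + q) / 2 ∨ (p + q + 1) / 2 = (p + q) / 2 + 1) := by omega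
  generalize (p + q + 1) / 2 = a at *
  generalize (p + q) / 2 = b at *
  rcases hab' with rfl | rfl <;> rcases h with h | h <;> nlinarith

lemma Nat.sq_add_sq_lt_of_add_eq {a b c d : ℕ} (hsum : a + b = c + d) (hc : c < a) (hd : d < a) :
    c ^ 2 + d ^ 2 < a ^ 2 + b ^ 2 := by
  zify at *
  rw [show (b : ℤ) = c + d - a by linarith]
  nlinarith [mul_pos (sub_pos.2 hc) (sub_pos.2 hd)]

lemma IsIntegral.map_of_forall_mem {R₁ R₂ B₁ B₂ : Type*} [CommRing R₁] [CommRing R₂]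
    [CommRing B₁] [CommRing B₂] [Algebra R₁ B₁] [Algebra R₂ B₂]
    {S₁ : Subalgebra R₁ B₁} {S₂ : Subalgebra R₂ B₂} (g : B₁ →+* B₂) (hg : ∀ x ∈ S₁, g x ∈ S₂)
    {x : B₁} (hx : IsIntegral S₁ x) : IsIntegral S₂ (g x) :=
  hx.map_of_comp_eq ((g.comp (algebraMap S₁ B₁)).codRestrict S₂ fun r => hg r r.2) g rfl

theorem Subalgebra.isIntegrallyClosed_of_isIntegral_of_mul_mem {R B : Type*} [CommRing R]
    [CommRing B] [IsDomain B] [IsIntegrallyClosed B] [Algebra R B] (S : Subalgebra R B)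
    (h : ∀ f : B, IsIntegral S f → ∀ q ∈ S, q ≠ 0 → q * f ∈ S → f ∈ S) :
    IsIntegrallyClosed S := by
  let L := FractionRing B
  have hinj : Function.Injective (algebraMap S L) := by
    rw [IsScalarTower.algebraMap_eq S B L]
    exact (IsFractionRing.injective B L).comp Subtype.val_injective
  have : FaithfulSMul S L := (faithfulSMul_iff_algebraMap_injective S L).2 hinj
  let := FractionRing.liftAlgebra S L
  have := FractionRing.isScalarTower_liftAlgebra S L
  rw [isIntegrallyClosed_iff (FractionRing S)]
  intro x hx
  obtain ⟨⟨r, s⟩, hx'⟩ := IsLocalization.mk'_surjective (nonZeroDivisors S) x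
  dsimp only at hx'
  have hy : IsIntegral S (algebraMap (FractionRing S) L x) :=
    hx.map (IsScalarTower.toAlgHom S (FractionRing S) L)
  obtain ⟨f, hf⟩ := (IsIntegrallyClosed.isIntegral_iff (R := B) (K := L)).1 hy.tower_top
  have hB (a : S) : algebraMap B L a = algebraMap (FractionRing S) L (algebraMap S _ a) := by
    rw [← IsScalarTower.algebraMap_apply, IsScalarTower.algebraMap_apply S B L]
    rfl
  have hsf : (s : B) * f = r := by
    apply IsFractionRing.injective B L
    rw [map_mul, hf, ← hx', hB, hB, ← map_mul, IsLocalization.mk'_spec']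
  have hfS := h f ((isIntegral_algebraMap_iff (IsFractionRing.injective B L)).1 (hf ▸ hy))
    s s.1.2 (by simp) (hsf ▸ r.2)
  refine ⟨⟨f, hfS⟩, (algebraMap (FractionRing S) L).injective ?_⟩
  exact (hB _).symm.trans hf

namespace MonomialSorting

section Sorting

open Finset

variable {n : ℕ}

noncomputable def prefixSum (k : ℕ) : (Fin n →₀ ℕ) →+ ℕ :=
  ∑ j ∈ univ.filter (fun j : Fin n => (j : ℕ) < k), Finsupp.applyAddHom j

lemma prefixSum_apply (k : ℕ) (m : Fin n →₀ ℕ) :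
    prefixSum k m = ∑ j ∈ univ.filter (fun j : Fin n => (j : ℕ) < k), m j := by
  simp [prefixSum]

@[simp] lemma prefixSum_zero (m : Fin n →₀ ℕ) : prefixSum 0 m = 0 := by
  simp [prefixSum_apply]

lemma prefixSum_succ (k : ℕ) (m : Fin n →₀ ℕ) :
    prefixSum (k + 1) m = prefixSum k m + if h : k < n then m ⟨k, h⟩ else 0 := by
  simp only [prefixSum_apply]
  split_ifs with h
  · have hk : (⟨k, h⟩ : Fin n) ∉ univ.filter fun j : Fin n => (j : ℕ) < k := by simp
    rw [← add_comm (m ⟨k, h⟩), ← sum_insert hk]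
    congr 1
    ext j
    simp only [mem_filter, mem_univ, true_and, mem_insert, Fin.ext_iff]
    omega
  · rw [add_zero]
    congr 1
    ext j
    simp only [mem_filter, mem_univ, true_and]
    omega

lemma prefixSum_mono (m : Fin n →₀ ℕ) : Monotone fun k => prefixSum k m :=
  monotone_nat_of_le_succ fun k => by rw [prefixSum_succ]; omega

lemma prefixSum_of_le {k : ℕ} (hk : n ≤ k) (m : Fin n →₀ ℕ) : prefixSum k m = prefixSum n m := by
  simp only [prefixSum_apply]
  congr 1
  ext j
  simp only [mem_filter, mem_univ, true_and]
  omega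

lemma apply_eq_prefixSum_sub (m : Fin n →₀ ℕ) (i : Fin n) :
    m i = prefixSum (i + 1) m - prefixSum i m := by
  simp [prefixSum_succ, i.isLt]

lemma ext_prefixSum {u v : Fin n →₀ ℕ} (h : ∀ k, prefixSum k u = prefixSum k v) : u = v := by
  ext i
  rw [apply_eq_prefixSum_sub u, apply_eq_prefixSum_sub v, h, h]

lemma forall_prefixSum_of_forall_le (r : ℕ → ℕ → Prop) {u v : Fin n →₀ ℕ}
    (h : ∀ k ≤ n, r (prefixSum k u) (prefixSum k v)) (k : ℕ) :
    r (prefixSum k u) (prefixSum k v) := by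
  rcases le_total k n with hk | hk
  · exact h k hk
  · rw [prefixSum_of_le hk, prefixSum_of_le hk]
    exact h n le_rfl

/-- The `j`-th of the `s` parts into which sorting cuts `m`: writing `x^m` as a word
`x_{i_1} ⋯ x_{i_N}` with `i_1 ≤ … ≤ i_N`, it collects the letters in positions `j+1, j+1+s, …`,
so its prefix sums are `⌈(P_k(m) - j) / s⌉ = (P_k(m) + s - 1 - j) / s`. -/
noncomputable def sortedPart (s j : ℕ) (m : Fin n →₀ ℕ) : Fin n →₀ ℕ :=
  Finsupp.equivFunOnFinite.symm fun i =>
    (prefixSum (i + 1) m + (s - 1 - j)) / s - (prefixSum i m + (s - 1 - j)) / s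

lemma prefixSum_sortedPart {s : ℕ} (hs : 0 < s) (j : ℕ) (m : Fin n →₀ ℕ) (k : ℕ) :
    prefixSum k (sortedPart s j m) = (prefixSum k m + (s - 1 - j)) / s := by
  induction k with
  | zero => rw [prefixSum_zero, prefixSum_zero, zero_add, Nat.div_eq_of_lt (by omega)]
  | succ k ih =>
    have hle : (prefixSum k m + (s - 1 - j)) / s ≤ (prefixSum (k + 1) m + (s - 1 - j)) / s :=
      Nat.div_le_div_right (by
        have : prefixSum k m ≤ prefixSum (k + 1) m := prefixSum_mono m k.le_succ
        omega)
    rw [prefixSum_succ, ih]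
    split_ifs with h
    · simp only [sortedPart, Finsupp.coe_equivFunOnFinite_symm]
      omega
    · rw [prefixSum_of_le (show n ≤ k + 1 by omega), prefixSum_of_le (show n ≤ k by omega)]
      rfl

lemma sortPair_eq_sortedPart (u v : Fin n →₀ ℕ) :
    sortPair u v = (sortedPart 2 0 (u + v), sortedPart 2 1 (u + v)) := by
  have hle (i : Fin n) : univ.filter (· ≤ i) = univ.filter fun j : Fin n => (j : ℕ) < i + 1 := by
    ext j; simp only [mem_filter, mem_univ, true_and]; omega
  have hlt (i : Fin n) : univ.filter (· < i) = univ.filter fun j : Fin n => (j : ℕ) < i := by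
    ext j; simp only [mem_filter, mem_univ, true_and]; omega
  simp [sortPair, sortedPart, prefixSum_apply, hle, hlt]

lemma sum_sortedPart {s : ℕ} (hs : 0 < s) (m : Fin n →₀ ℕ) :
    ∑ j ∈ range s, sortedPart s j m = m := by
  refine ext_prefixSum fun k => ?_
  simp only [map_sum, prefixSum_sortedPart hs]
  rw [sum_range_reflect (fun j => (prefixSum k m + j) / s) s, Nat.sum_range_add_div _ _ hs]

lemma sortedPart_nsmul {N s q : ℕ} (hN : 0 < N) (hq : q < s) (m : Fin n →₀ ℕ) :
    sortedPart (N * s) (q * N) (N • m) = sortedPart s q m := by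
  refine ext_prefixSum fun k => ?_
  rw [prefixSum_sortedPart (Nat.mul_pos hN (by omega)), prefixSum_sortedPart (by omega), map_nsmul,
    smul_eq_mul, ← Nat.div_div_eq_div_mul]
  congr 1
  have : N * s - 1 - q * N = N * (s - 1 - q) + (N - 1) := by
    rw [Nat.mul_sub, Nat.mul_sub, mul_one, mul_comm q]
    have := Nat.mul_le_mul_left N (show q + 1 ≤ s by omega)
    rw [Nat.mul_add, mul_one] at this
    omega
  rw [this, ← add_assoc, ← Nat.mul_add, Nat.mul_add_div hN, Nat.div_eq_of_lt (by omega), add_zero]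

lemma sortedPart_succ_succ {s j : ℕ} (hj : j < s) {m T : Fin n →₀ ℕ}
    (hT : m = sortedPart (s + 1) 0 m + T) : sortedPart (s + 1) (j + 1) m = sortedPart s j T := by
  refine ext_prefixSum fun k => ?_
  have hm := congrArg (prefixSum k) hT
  rw [map_add, prefixSum_sortedPart (Nat.succ_pos s)] at hm
  rw [prefixSum_sortedPart (Nat.succ_pos s), prefixSum_sortedPart (by omega),
    show prefixSum k T = prefixSum k m - (prefixSum k m + s) / (s + 1) by
      simp only [Nat.succ_eq_add_one, Nat.add_sub_cancel, Nat.sub_zero] at hm; omega,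
    Nat.sub_ceil_div_add_div (by omega)]
  congr 2
  omega

-- Equivalently, `sortPair u v = (u, v)`.
def Dominates (u v : Fin n →₀ ℕ) : Prop :=
  ∀ k, prefixSum k v ≤ prefixSum k u ∧ prefixSum k u ≤ prefixSum k v + 1

lemma prefixSum_sortPair_fst (u v : Fin n →₀ ℕ) (k : ℕ) :
    prefixSum k (sortPair u v).1 = (prefixSum k u + prefixSum k v + 1) / 2 := by
  rw [sortPair_eq_sortedPart, prefixSum_sortedPart two_pos, map_add]
  rfl

lemma prefixSum_sortPair_snd (u v : Fin n →₀ ℕ) (k : ℕ) :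
    prefixSum k (sortPair u v).2 = (prefixSum k u + prefixSum k v) / 2 := by
  rw [sortPair_eq_sortedPart, prefixSum_sortedPart two_pos, map_add]
  rfl

lemma sortPair_fst_add_snd (u v : Fin n →₀ ℕ) :
    (sortPair u v).1 + (sortPair u v).2 = u + v := by
  refine ext_prefixSum fun k => ?_
  rw [map_add, map_add, prefixSum_sortPair_fst, prefixSum_sortPair_snd]
  omega

def IsSorted (S : Multiset (Fin n →₀ ℕ)) : Prop :=
  ∀ u v rest, S = u ::ₘ v ::ₘ rest → Dominates u v ∨ Dominates v u

noncomputable def totalPrefixSum : (Fin n →₀ ℕ) →+ ℕ := ∑ k ∈ range (n + 1), prefixSum k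

lemma totalPrefixSum_apply (u : Fin n →₀ ℕ) :
    totalPrefixSum u = ∑ k ∈ range (n + 1), prefixSum k u := by
  simp [totalPrefixSum]

noncomputable def sqPrefixSum (u : Fin n →₀ ℕ) : ℕ := ∑ k ∈ range (n + 1), prefixSum k u ^ 2

lemma exists_prefixSum_lt_of_not_dominates {u v : Fin n →₀ ℕ}
    (hclose : ∀ k, prefixSum k u ≤ prefixSum k v + 1) (h : ¬Dominates u v) :
    ∃ k ≤ n, prefixSum k u < prefixSum k v := by
  by_contra! hc
  exact h fun k => ⟨forall_prefixSum_of_forall_le (fun a b => b ≤ a) hc k, hclose k⟩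

lemma sqPrefixSum_sortPair_lt {u v : Fin n →₀ ℕ}
    (hfar : ∃ k ≤ n, prefixSum k u + 2 ≤ prefixSum k v ∨ prefixSum k v + 2 ≤ prefixSum k u) :
    sqPrefixSum (sortPair u v).1 + sqPrefixSum (sortPair u v).2 <
      sqPrefixSum u + sqPrefixSum v := by
  obtain ⟨k, hk, hfar⟩ := hfar
  simp only [sqPrefixSum, ← sum_add_distrib, prefixSum_sortPair_fst, prefixSum_sortPair_snd]
  exact sum_lt_sum (fun k _ => Nat.sq_add_sq_half_le _ _)
    ⟨k, mem_range.2 (Nat.lt_succ_of_le hk), Nat.sq_add_sq_half_lt hfar⟩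

lemma totalPrefixSum_lt_of_forall_eq_max {a b w : Fin n →₀ ℕ} (hab : ¬Dominates a b)
    (hclose : ∀ k, prefixSum k a ≤ prefixSum k b + 1)
    (hw : ∀ k, prefixSum k w = max (prefixSum k a) (prefixSum k b)) :
    totalPrefixSum a < totalPrefixSum w := by
  obtain ⟨k, hk, hlt⟩ := exists_prefixSum_lt_of_not_dominates hclose hab
  simp only [totalPrefixSum_apply, hw]
  exact sum_lt_sum (fun k _ => le_max_left _ _)
    ⟨k, mem_range.2 (Nat.lt_succ_of_le hk), lt_max_of_lt_right hlt⟩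

/-- Here sorting takes the pointwise maximum and minimum of the prefix sums. -/
lemma sortPair_spread {u v : Fin n →₀ ℕ} (huv : ¬Dominates u v) (hvu : ¬Dominates v u)
    (hclose : ∀ k, prefixSum k u ≤ prefixSum k v + 1 ∧ prefixSum k v ≤ prefixSum k u + 1) :
    sqPrefixSum (sortPair u v).1 + sqPrefixSum (sortPair u v).2 =
        sqPrefixSum u + sqPrefixSum v ∧
      totalPrefixSum u ^ 2 + totalPrefixSum v ^ 2 <
        totalPrefixSum (sortPair u v).1 ^ 2 + totalPrefixSum (sortPair u v).2 ^ 2 := by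
  have hmax (k : ℕ) : prefixSum k (sortPair u v).1 = max (prefixSum k u) (prefixSum k v) := by
    rw [prefixSum_sortPair_fst]; have := hclose k; omega
  have hmin (k : ℕ) : prefixSum k (sortPair u v).2 = min (prefixSum k u) (prefixSum k v) := by
    rw [prefixSum_sortPair_snd]; have := hclose k; omega
  refine ⟨?_, Nat.sq_add_sq_lt_of_add_eq ?_
    (totalPrefixSum_lt_of_forall_eq_max huv (fun k => (hclose k).1) hmax)
    (totalPrefixSum_lt_of_forall_eq_max hvu (fun k => (hclose k).2)
      fun k => (hmax k).trans (max_comm _ _))⟩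
  · simp only [sqPrefixSum, ← sum_add_distrib, hmax, hmin]
    refine sum_congr rfl fun k _ => ?_
    rcases le_total (prefixSum k u) (prefixSum k v) with h | h
    · rw [max_eq_right h, min_eq_left h, add_comm]
    · rw [max_eq_left h, min_eq_right h]
  · rw [← map_add, ← map_add, sortPair_fst_add_snd]

lemma sortPair_potential {u v : Fin n →₀ ℕ} (huv : ¬Dominates u v) (hvu : ¬Dominates v u) :
    sqPrefixSum (sortPair u v).1 + sqPrefixSum (sortPair u v).2 < sqPrefixSum u + sqPrefixSum v ∨
      sqPrefixSum (sortPair u v).1 + sqPrefixSum (sortPair u v).2 =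
          sqPrefixSum u + sqPrefixSum v ∧
        totalPrefixSum u ^ 2 + totalPrefixSum v ^ 2 <
          totalPrefixSum (sortPair u v).1 ^ 2 + totalPrefixSum (sortPair u v).2 ^ 2 := by
  by_cases hfar : ∃ k ≤ n, prefixSum k u + 2 ≤ prefixSum k v ∨ prefixSum k v + 2 ≤ prefixSum k u
  · exact Or.inl (sqPrefixSum_sortPair_lt hfar)
  push Not at hfar
  exact Or.inr (sortPair_spread huv hvu (forall_prefixSum_of_forall_le
    (fun a b => a ≤ b + 1 ∧ b ≤ a + 1) fun k hk => by have := hfar k hk; omega))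

/-- The second coordinate measures the spread of the total prefix sums from below a bound
that sorting leaves unchanged (`sum_totalPrefixSum_sq_le`), so the truncated subtraction is
harmless. -/
noncomputable def sortingPotential (S : Multiset (Fin n →₀ ℕ)) : ℕ ×ₗ ℕ :=
  toLex ((S.map sqPrefixSum).sum,
    Multiset.card S * totalPrefixSum S.sum ^ 2 - (S.map fun u => totalPrefixSum u ^ 2).sum)

lemma sum_totalPrefixSum_sq_le (S : Multiset (Fin n →₀ ℕ)) :
    (S.map fun u => totalPrefixSum u ^ 2).sum ≤ Multiset.card S * totalPrefixSum S.sum ^ 2 := by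
  simpa using Multiset.sum_le_card_nsmul (S.map fun u => totalPrefixSum u ^ 2) _ fun x hx => by
    obtain ⟨u, hu, rfl⟩ := Multiset.mem_map.1 hx
    obtain ⟨c, hc⟩ := le_iff_exists_add.1 (Multiset.le_sum_of_mem hu)
    rw [hc, map_add]
    exact Nat.pow_le_pow_left (Nat.le_add_right _ _) 2

variable {A : Set (Fin n →₀ ℕ)}

lemma exists_sortingPotential_lt
    (hsort : ∀ a ∈ A, ∀ b ∈ A, (sortPair a b).1 ∈ A ∧ (sortPair a b).2 ∈ A)
    {S : Multiset (Fin n →₀ ℕ)} (hS : ∀ u ∈ S, u ∈ A) (hns : ¬IsSorted S) :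
    ∃ S', (∀ u ∈ S', u ∈ A) ∧ Multiset.card S' = Multiset.card S ∧ S'.sum = S.sum ∧
      sortingPotential S' < sortingPotential S := by
  simp only [IsSorted, not_forall, not_or] at hns
  obtain ⟨u, v, rest, rfl, huv, hvu⟩ := hns
  have hsum : ((sortPair u v).1 ::ₘ (sortPair u v).2 ::ₘ rest).sum = (u ::ₘ v ::ₘ rest).sum := by
    simp only [Multiset.sum_cons, ← add_assoc, sortPair_fst_add_snd]
  refine ⟨(sortPair u v).1 ::ₘ (sortPair u v).2 ::ₘ rest, ?_, by simp, hsum, ?_⟩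
  · have hsorted := hsort u (hS u (by simp)) v (hS v (by simp))
    simp only [Multiset.mem_cons]
    rintro w (rfl | rfl | hw)
    exacts [hsorted.1, hsorted.2, hS w (by simp [hw])]
  · have hbound := sum_totalPrefixSum_sq_le ((sortPair u v).1 ::ₘ (sortPair u v).2 ::ₘ rest)
    rw [hsum] at hbound
    simp only [sortingPotential, hsum, Prod.Lex.toLex_lt_toLex, Multiset.map_cons,
      Multiset.sum_cons, Multiset.card_cons] at hbound ⊢
    rcases sortPair_potential huv hvu with h | ⟨h, h'⟩ <;> omega

theorem exists_isSorted
    (hsort : ∀ a ∈ A, ∀ b ∈ A, (sortPair a b).1 ∈ A ∧ (sortPair a b).2 ∈ A)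
    (S : Multiset (Fin n →₀ ℕ)) (hS : ∀ u ∈ S, u ∈ A) :
    ∃ S', (∀ u ∈ S', u ∈ A) ∧ Multiset.card S' = Multiset.card S ∧ S'.sum = S.sum ∧
      IsSorted S' := by
  induction hp : sortingPotential S using WellFoundedLT.induction generalizing S with
  | _ p ih =>
    by_cases h : IsSorted S
    · exact ⟨S, hS, rfl, rfl, h⟩
    obtain ⟨S', hS'A, hcard, hsum, hlt⟩ := exists_sortingPotential_lt hsort hS h
    obtain ⟨S'', hS''A, hcard', hsum', hsorted⟩ := ih _ (hp ▸ hlt) S' hS'A rfl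
    exact ⟨S'', hS''A, hcard'.trans hcard, hsum'.trans hsum, hsorted⟩

lemma IsSorted.of_cons {a : Fin n →₀ ℕ} {T : Multiset (Fin n →₀ ℕ)} (h : IsSorted (a ::ₘ T)) :
    IsSorted T := fun u v rest hT =>
  h u v (a ::ₘ rest) (by rw [hT, Multiset.cons_swap v a, Multiset.cons_swap u a])

lemma IsSorted.exists_dominates {S : Multiset (Fin n →₀ ℕ)} (hS : IsSorted S) (h0 : S ≠ 0) :
    ∃ u ∈ S, ∀ v ∈ S.erase u, Dominates u v := by
  obtain ⟨u, hu, hmax⟩ := Multiset.exists_max_image totalPrefixSum h0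
  refine ⟨u, hu, fun v hv => ?_⟩
  have huv : S = u ::ₘ v ::ₘ (S.erase u).erase v := by
    rw [Multiset.cons_erase hv, Multiset.cons_erase hu]
  rcases hS u v _ huv with huv | hvu
  · exact huv
  intro k
  have hle (k : ℕ) : prefixSum k u ≤ prefixSum k v := (hvu k).1
  have heq := (sum_eq_sum_iff_of_le fun k _ => hle k).1
    ((sum_le_sum fun k _ => hle k).antisymm (by
      simpa only [totalPrefixSum_apply] using hmax v (Multiset.mem_of_mem_erase hv)))
  have := forall_prefixSum_of_forall_le (fun a b => a = b) (u := u) (v := v)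
    (fun k hk => heq k (mem_range.2 (Nat.lt_succ_of_le hk))) k
  omega

lemma eq_sortedPart_zero_of_dominates {u : Fin n →₀ ℕ} {T : Multiset (Fin n →₀ ℕ)}
    (h : ∀ v ∈ T, Dominates u v) :
    u = sortedPart (Multiset.card T + 1) 0 (u + T.sum) := by
  refine ext_prefixSum fun k => ?_
  rw [prefixSum_sortedPart (Nat.succ_pos _), map_add, map_multiset_sum]
  set p := prefixSum k u
  set t := Multiset.card T
  have hlow : t * (p - 1) ≤ (T.map (prefixSum k)).sum := by
    simpa using Multiset.card_nsmul_le_sum (s := T.map (prefixSum k)) (a := p - 1) fun x hx => by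
      obtain ⟨v, hv, rfl⟩ := Multiset.mem_map.1 hx
      have := (h v hv k).2; omega
  have hhigh : (T.map (prefixSum k)).sum ≤ t * p := by
    simpa using Multiset.sum_le_card_nsmul (T.map (prefixSum k)) p fun x hx => by
      obtain ⟨v, hv, rfl⟩ := Multiset.mem_map.1 hx
      exact (h v hv k).1
  have hp : t * p ≤ t * (p - 1) + t := by
    rw [← Nat.mul_add_one]; exact Nat.mul_le_mul_left t (by omega)
  symm
  apply Nat.div_eq_of_lt_le
  · rw [show p * (t + 1) = t * p + p by ring]; omega
  · rw [show (p + 1) * (t + 1) = t * p + p + t + 1 by ring]; omega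

theorem sortedPart_mem_of_isSorted {S : Multiset (Fin n →₀ ℕ)} (hS : IsSorted S) {j : ℕ}
    (hj : j < Multiset.card S) : sortedPart (Multiset.card S) j S.sum ∈ S := by
  induction hc : Multiset.card S generalizing S j with
  | zero => omega
  | succ t ih =>
    obtain ⟨u, hu, hdom⟩ := hS.exists_dominates (by rintro rfl; simp at hc)
    obtain ⟨T, rfl⟩ : ∃ T, S = u ::ₘ T := ⟨_, (Multiset.cons_erase hu).symm⟩
    rw [Multiset.erase_cons_head] at hdom
    rw [Multiset.card_cons] at hc hj
    obtain rfl : Multiset.card T = t := by omega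
    have hu0 := eq_sortedPart_zero_of_dominates hdom
    rw [Multiset.sum_cons]
    rcases j with _ | j
    · rw [← hu0]
      exact Multiset.mem_cons_self _ _
    · rw [sortedPart_succ_succ (by omega) (by rw [← hu0])]
      exact Multiset.mem_cons_of_mem (ih hS.of_cons (by omega) rfl)

lemma degree_multiset_sum_of_forall_degree_eq {d : ℕ} (hdeg : ∀ a ∈ A, a.degree = d)
    {S : Multiset (Fin n →₀ ℕ)} (hS : ∀ u ∈ S, u ∈ A) : S.sum.degree = Multiset.card S * d := by
  rw [map_multiset_sum, Multiset.map_congr rfl fun u hu => hdeg u (hS u hu), Multiset.map_const',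
    Multiset.sum_replicate, smul_eq_mul]

theorem mem_closure_of_nsmul_mem {d : ℕ} (hdeg : ∀ a ∈ A, a.degree = d)
    (hsort : ∀ a ∈ A, ∀ b ∈ A, (sortPair a b).1 ∈ A ∧ (sortPair a b).2 ∈ A)
    {v : Fin n →₀ ℕ} (hdv : d ∣ v.degree) {N : ℕ} (hN : 0 < N)
    (hNv : N • v ∈ AddSubmonoid.closure A) : v ∈ AddSubmonoid.closure A := by
  rcases eq_or_ne v 0 with rfl | hv
  · exact zero_mem _
  obtain ⟨t, ht⟩ := hdv
  have hdt : 0 < d * t := by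
    rw [← ht]; exact Nat.pos_of_ne_zero ((Finsupp.degree_eq_zero_iff v).not.2 hv)
  obtain ⟨S, hSA, hSv⟩ := AddSubmonoid.exists_multiset_of_mem_closure hNv
  have hcard : Multiset.card S = N * t := by
    have := degree_multiset_sum_of_forall_degree_eq hdeg hSA
    rw [hSv, map_nsmul, ht, smul_eq_mul] at this
    exact (Nat.eq_of_mul_eq_mul_right (Nat.pos_of_mul_pos_right hdt) (by linarith)).symm
  obtain ⟨S', hS'A, hc, hs, hsorted⟩ := exists_isSorted hsort S hSA
  rw [← sum_sortedPart (Nat.pos_of_mul_pos_left hdt) v]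
  refine sum_mem fun q hq => AddSubmonoid.subset_closure ?_
  rw [← sortedPart_nsmul hN (mem_range.1 hq) v, ← hSv, ← hs, ← hcard, ← hc]
  refine hS'A _ (sortedPart_mem_of_isSorted hsorted ?_)
  rw [hc, hcard, mul_comm N]
  exact Nat.mul_lt_mul_of_pos_right (mem_range.1 hq) hN

end Sorting

section MonomialSubalgebra

variable {σ : Type*}

noncomputable def monomialSubalgebra (R : Type*) [CommSemiring R] (A : Set (σ →₀ ℕ)) :
    Subalgebra R (MvPolynomial σ R) :=
  Algebra.adjoin R ((fun a => monomial a (1 : R)) '' A)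

variable {R : Type*} [CommSemiring R] {A : Set (σ →₀ ℕ)}

lemma monomial_mem_monomialSubalgebra {v : σ →₀ ℕ} (hv : v ∈ AddSubmonoid.closure A) (c : R) :
    monomial v c ∈ monomialSubalgebra R A := by
  rw [← mul_one c, ← smul_eq_mul, ← smul_monomial]
  refine Subalgebra.smul_mem _ ?_ c
  induction hv using AddSubmonoid.closure_induction with
  | mem a ha => exact Algebra.subset_adjoin ⟨a, ha, rfl⟩
  | zero => exact one_mem _
  | add x y _ _ hx hy => rw [← mul_one (1 : R), ← monomial_mul]; exact mul_mem hx hy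

lemma mem_monomialSubalgebra_iff {f : MvPolynomial σ R} :
    f ∈ monomialSubalgebra R A ↔ ∀ v ∈ f.support, v ∈ AddSubmonoid.closure A := by
  classical
  refine ⟨fun hf => ?_, fun h => ?_⟩
  · induction hf using Algebra.adjoin_induction with
    | mem x hx =>
      obtain ⟨a, ha, rfl⟩ := hx
      intro v hv
      rw [Finset.mem_singleton.1 (support_monomial_subset hv)]
      exact AddSubmonoid.subset_closure ha
    | algebraMap r =>
      intro v hv
      rw [Finset.mem_singleton.1 (support_monomial_subset hv)]
      exact zero_mem _
    | add x y _ _ hx hy =>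
      intro v hv
      exact (Finset.mem_union.1 (support_add hv)).elim (hx v) (hy v)
    | mul x y _ _ hx hy =>
      intro v hv
      obtain ⟨v₁, hv₁, v₂, hv₂, rfl⟩ := Finset.mem_add.1 (support_mul x y hv)
      exact add_mem (hx v₁ hv₁) (hy v₂ hv₂)
  · rw [f.as_sum]
    exact sum_mem fun v hv => monomial_mem_monomialSubalgebra (h v hv) _

lemma dvd_degree_of_mem_closure {d : ℕ} (hdeg : ∀ a ∈ A, a.degree = d) {m : σ →₀ ℕ}
    (hm : m ∈ AddSubmonoid.closure A) : d ∣ m.degree := by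
  induction hm using AddSubmonoid.closure_induction with
  | mem a ha => exact (hdeg a ha).symm ▸ dvd_rfl
  | zero => simp
  | add x y _ _ hx hy => rw [map_add]; exact dvd_add hx hy

end MonomialSubalgebra

section Integrality

variable {σ R : Type*} [CommRing R] {A : Set (σ →₀ ℕ)}

lemma coeff_nsmul_mul_monomial_pow (f : MvPolynomial σ R) (v : σ →₀ ℕ) (c : R) {i k : ℕ}
    (hik : i ≤ k) : coeff (k • v) (f * monomial v c ^ i) = coeff ((k - i) • v) f * c ^ i := by
  have hsub : k • v - i • v = (k - i) • v := by ext; simp [Nat.sub_mul]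
  rw [monomial_pow, coeff_mul_monomial', if_pos (nsmul_le_nsmul_left (zero_le : 0 ≤ v) hik), hsub]

/-- In a monic equation for `c x^v` over `R[A]`, the coefficient of `x^{k v}` involves `c^k`
from the leading term, so some lower coefficient must contain a monomial `x^{(k-i) v}`. -/
theorem exists_nsmul_mem_closure_of_isIntegral_monomial [NoZeroDivisors R] {v : σ →₀ ℕ} {c : R}
    (hc : c ≠ 0) (h : IsIntegral (monomialSubalgebra R A) (monomial v c)) :
    ∃ N, 0 < N ∧ N • v ∈ AddSubmonoid.closure A := by
  obtain ⟨p, hm, hp⟩ := h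
  have hcoeff := congrArg (coeff (p.natDegree • v)) hp
  rw [Polynomial.eval₂_eq_sum_range, coeff_sum, coeff_zero, Finset.sum_range_succ,
    Finset.sum_congr rfl fun i hi =>
      coeff_nsmul_mul_monomial_pow _ v c (Finset.mem_range.1 hi).le,
    coeff_nsmul_mul_monomial_pow _ v c le_rfl, hm.coeff_natDegree, map_one, Nat.sub_self,
    zero_smul, coeff_zero_one, one_mul] at hcoeff
  obtain ⟨i, hi, hne⟩ : ∃ i ∈ Finset.range p.natDegree,
      coeff ((p.natDegree - i) • v) (p.coeff i : MvPolynomial σ R) ≠ 0 := by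
    by_contra! hzero
    rw [Finset.sum_eq_zero fun i hi => by
      change coeff _ (p.coeff i : MvPolynomial σ R) * _ = 0
      rw [hzero i hi, zero_mul], zero_add] at hcoeff
    exact pow_ne_zero _ hc hcoeff
  exact ⟨p.natDegree - i, by have := Finset.mem_range.1 hi; omega,
    mem_monomialSubalgebra_iff.1 (p.coeff i).2 _ (mem_support_iff.2 hne)⟩

-- `x_i ↦ t_i x_i`, the `t_i = C (X i)` being the variables of the coefficient ring.
noncomputable def twist :
    MvPolynomial σ (MvPolynomial σ R) →ₐ[MvPolynomial σ R] MvPolynomial σ (MvPolynomial σ R) :=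
  aeval fun i => C (X i) * X i

lemma twist_monomial (v : σ →₀ ℕ) (c : MvPolynomial σ R) :
    twist (monomial v c) = monomial v (monomial v 1 * c) := by
  simp only [twist, aeval_monomial, mul_pow, Finsupp.prod_mul, algebraMap_eq]
  rw [monomial_eq, monomial_eq (a := (1 : R)), C_1, one_mul, map_mul, map_finsuppProd]
  simp only [map_pow]
  ring

lemma coeff_twist (F : MvPolynomial σ (MvPolynomial σ R)) (v : σ →₀ ℕ) :
    coeff v (twist F) = monomial v 1 * coeff v F := by
  classical
  induction F using MvPolynomial.induction_on' with
  | monomial u c =>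
    rw [twist_monomial, coeff_monomial, coeff_monomial]
    split_ifs with h
    · rw [h]
    · rw [mul_zero]
  | add p q hp hq => rw [map_add, coeff_add, coeff_add, hp, hq, mul_add]

lemma isIntegral_twist {F : MvPolynomial σ (MvPolynomial σ R)}
    (hF : IsIntegral (monomialSubalgebra (MvPolynomial σ R) A) F) :
    IsIntegral (monomialSubalgebra (MvPolynomial σ R) A) (twist F) :=
  hF.map_of_forall_mem twist.toRingHom fun x hx => mem_monomialSubalgebra_iff.2 fun v hv =>
    mem_monomialSubalgebra_iff.1 hx v <| mem_support_iff.2 fun h0 => mem_support_iff.1 hv <| by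
      rw [AlgHom.toRingHom_eq_coe, RingHom.coe_coe, coeff_twist, h0, mul_zero]

variable [IsDomain R]

/-- `twist F - t^{v₀} F` is still integral, loses the monomial `x^{v₀}` and keeps every other
one, since the `t^u` are pairwise distinct; induct on the support. -/
theorem exists_isIntegral_monomial_of_mem_support {F : MvPolynomial σ (MvPolynomial σ R)}
    (hF : IsIntegral (monomialSubalgebra (MvPolynomial σ R) A) F) {v : σ →₀ ℕ}
    (hv : v ∈ F.support) :
    ∃ c : MvPolynomial σ R, c ≠ 0 ∧
      IsIntegral (monomialSubalgebra (MvPolynomial σ R) A) (monomial v c) := by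
  classical
  induction hN : F.support.card using Nat.strong_induction_on generalizing F with
  | _ N ih =>
    by_cases hsingle : F.support ⊆ {v}
    · refine ⟨coeff v F, mem_support_iff.1 hv, ?_⟩
      convert hF using 1
      refine MvPolynomial.ext _ _ fun u => ?_
      rw [coeff_monomial]
      split_ifs with h
      · rw [h]
      · exact (notMem_support_iff.1 fun hu => h (Finset.mem_singleton.1 (hsingle hu)).symm).symm
    obtain ⟨v₀, hv₀, hv₀v⟩ := Finset.not_subset.1 hsingle
    rw [Finset.mem_singleton] at hv₀v
    set F' := twist F - C (monomial v₀ (1 : R)) * F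
    have hF' : IsIntegral (monomialSubalgebra (MvPolynomial σ R) A) F' :=
      (isIntegral_twist hF).sub (isIntegral_algebraMap.tower_top.mul hF)
    have hcoeff (u : σ →₀ ℕ) :
        coeff u F' = (monomial u (1 : R) - monomial v₀ 1) * coeff u F := by
      rw [coeff_sub, coeff_twist, coeff_C_mul, sub_mul]
    have hsupp : F'.support ⊆ F.support.erase v₀ := fun u hu => by
      rw [mem_support_iff, hcoeff] at hu
      exact Finset.mem_erase.2
        ⟨by rintro rfl; simp at hu, mem_support_iff.2 (right_ne_zero_of_mul hu)⟩
    have hvF' : v ∈ F'.support := by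
      rw [mem_support_iff, hcoeff]
      exact mul_ne_zero (sub_ne_zero.2 fun h => hv₀v (monomial_left_injective one_ne_zero h).symm)
        (mem_support_iff.1 hv)
    exact ih _ (hN ▸ (Finset.card_le_card hsupp).trans_lt (Finset.card_erase_lt_of_mem hv₀))
      hF' hvF' rfl

theorem exists_nsmul_mem_closure_of_isIntegral {f : MvPolynomial σ R}
    (hf : IsIntegral (monomialSubalgebra R A) f) {v : σ →₀ ℕ} (hv : v ∈ f.support) :
    ∃ N, 0 < N ∧ N • v ∈ AddSubmonoid.closure A := by
  have hmap : IsIntegral (monomialSubalgebra (MvPolynomial σ R) A)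
      (map (C : R →+* MvPolynomial σ R) f) :=
    IsIntegral.map_of_forall_mem (S₂ := monomialSubalgebra (MvPolynomial σ R) A) (map C)
      (fun x hx => mem_monomialSubalgebra_iff.2 fun v hv =>
      mem_monomialSubalgebra_iff.1 hx v (support_map_subset _ _ hv)) hf
  obtain ⟨c, hc, hint⟩ := exists_isIntegral_monomial_of_mem_support hmap
    (by rwa [support_map_of_injective _ (C_injective σ R)])
  exact exists_nsmul_mem_closure_of_isIntegral_monomial hc hint

end Integrality

lemma support_sub_monomial_coeff {σ R : Type*} [DecidableEq σ] [CommRing R]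
    (f : MvPolynomial σ R) (v : σ →₀ ℕ) :
    (f - monomial v (coeff v f)).support = f.support.erase v := by
  ext u
  rw [Finset.mem_erase, mem_support_iff, mem_support_iff, coeff_sub, coeff_monomial]
  split_ifs with h
  · simp [h]
  · simp [Ne.symm h]

/-- The leading monomials of `q` and `f` for a monomial order add up to a monomial of `q f`, and
removing the leading term of `f` preserves the hypothesis. -/
lemma dvd_degree_of_mem_support {σ R : Type*} [LinearOrder σ] [WellFoundedGT σ] [CommRing R]
    [NoZeroDivisors R] {d : ℕ} {q : MvPolynomial σ R} (hq0 : q ≠ 0)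
    (hq : ∀ u ∈ q.support, d ∣ u.degree) {f : MvPolynomial σ R}
    (hqf : ∀ w ∈ (q * f).support, d ∣ w.degree) {v : σ →₀ ℕ} (hv : v ∈ f.support) :
    d ∣ v.degree := by
  classical
  induction hN : f.support.card using Nat.strong_induction_on generalizing f with
  | _ N ih =>
    have hf0 : f ≠ 0 := by rintro rfl; simp at hv
    set m : MonomialOrder σ := MonomialOrder.lex
    have hlead : d ∣ (m.degree f).degree := by
      have h := hqf (m.degree q + m.degree f) (by
        rw [← m.degree_mul hq0 hf0]; exact m.degree_mem_support (mul_ne_zero hq0 hf0))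
      rw [map_add] at h
      exact (Nat.dvd_add_right (hq _ (m.degree_mem_support hq0))).1 h
    by_cases hv₀ : v = m.degree f
    · exact hv₀ ▸ hlead
    set f' := f - monomial (m.degree f) (coeff (m.degree f) f)
    have hsupp := support_sub_monomial_coeff f (m.degree f)
    refine ih _ ?_ (f := f') (fun w hw => ?_)
      (by rw [hsupp]; exact Finset.mem_erase.2 ⟨hv₀, hv⟩) rfl
    · rw [← hN, hsupp]
      exact Finset.card_erase_lt_of_mem (m.degree_mem_support hf0)
    rw [mul_sub] at hw
    rcases Finset.mem_union.1 (support_sub σ _ _ hw) with hw | hw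
    · exact hqf w hw
    rw [mem_support_iff, coeff_mul_monomial'] at hw
    split_ifs at hw with hle
    · rw [← tsub_add_cancel_of_le hle, map_add]
      exact dvd_add (hq _ (mem_support_iff.2 (left_ne_zero_of_mul hw))) hlead
    · exact absurd rfl hw

theorem mem_monomialSubalgebra_of_isIntegral {n : ℕ} {K : Type*} [CommRing K] [IsDomain K]
    {A : Set (Fin n →₀ ℕ)} {d : ℕ} (hdeg : ∀ a ∈ A, a.degree = d)
    (hsort : ∀ a ∈ A, ∀ b ∈ A, (sortPair a b).1 ∈ A ∧ (sortPair a b).2 ∈ A)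
    {f : MvPolynomial (Fin n) K} (hf : IsIntegral (monomialSubalgebra K A) f)
    {q : MvPolynomial (Fin n) K} (hq : q ∈ monomialSubalgebra K A) (hq0 : q ≠ 0)
    (hqf : q * f ∈ monomialSubalgebra K A) : f ∈ monomialSubalgebra K A := by
  have hdvd {g : MvPolynomial (Fin n) K} (hg : g ∈ monomialSubalgebra K A) :
      ∀ w ∈ g.support, d ∣ w.degree := fun w hw =>
    dvd_degree_of_mem_closure hdeg (mem_monomialSubalgebra_iff.1 hg w hw)
  refine mem_monomialSubalgebra_iff.2 fun v hv => ?_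
  obtain ⟨N, hN, hNv⟩ := exists_nsmul_mem_closure_of_isIntegral hf hv
  exact mem_closure_of_nsmul_mem hdeg hsort
    (dvd_degree_of_mem_support hq0 (hdvd hq) (hdvd hqf) hv) hN hNv

end MonomialSorting

/-- If `A` is a sortable set of monomials of degree `d` in
`S = K[x_1,…,x_n]`, then the `K`-subalgebra `K[A]` of `S` generated by `A` is an
integrally closed (normal) integral domain. -/
theorem stmt1 {K : Type*} [Field K] {n d : ℕ} (A : Set (Fin n →₀ ℕ))
    (hdeg : ∀ a ∈ A, (∑ i, a i) = d)
    (hsort : ∀ a ∈ A, ∀ b ∈ A, (sortPair a b).1 ∈ A ∧ (sortPair a b).2 ∈ A) :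
    IsDomain ↥(Algebra.adjoin K
        ((fun a => (MvPolynomial.monomial a (1 : K) : MvPolynomial (Fin n) K)) '' A)) ∧
    IsIntegrallyClosed ↥(Algebra.adjoin K
        ((fun a => (MvPolynomial.monomial a (1 : K) : MvPolynomial (Fin n) K)) '' A)) := by
  change IsDomain (MonomialSorting.monomialSubalgebra K A) ∧
    IsIntegrallyClosed (MonomialSorting.monomialSubalgebra K A)
  have hdeg' (a : Fin n →₀ ℕ) (ha : a ∈ A) : a.degree = d := a.degree_eq_sum.trans (hdeg a ha)
  exact ⟨inferInstance, Subalgebra.isIntegrallyClosed_of_isIntegral_of_mul_mem _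
    fun _ hf _ hq hq0 hqf =>
      MonomialSorting.mem_monomialSubalgebra_of_isIntegral hdeg' hsort hf hq hq0 hqf⟩
end

section
/- Let n ≥ 1, d ≥ 0 be integers and a = (a_1,...,a_n) an integer vector with a_1 ≥ a_2 ≥ ... ≥ a_n ≥ 0. Then the Veronese type set A = { x_1^{b_1}⋯x_n^{b_n} : b_1 + ... + b_n = d and b_i ≤ a_i for all i } is a sortable set of monomials: for all u, v ∈ A, sort(u,v) ∈ A × A. -/
open MvPolynomial

/-!
Put `c = u + v` and `s_k = c_1 + ⋯ + c_k`. The `i`-th exponents of `sort(u, v)` are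
`⌈s_i/2⌉ - ⌈s_{i-1}/2⌉` and `⌊s_i/2⌋ - ⌊s_{i-1}/2⌋`. Their sums telescope to `⌈2d/2⌉ = ⌊2d/2⌋ = d`,
and each of them is at most `⌈c_i/2⌉ ≤ a_i`, because `c_i ≤ 2 a_i`.
-/

open Finset

def partialSum {n : ℕ} (c : Fin n → ℕ) (k : ℕ) : ℕ :=
  ∑ j ∈ univ.filter (fun j : Fin n => (j : ℕ) < k), c j

section partialSum

variable {n : ℕ} (c : Fin n → ℕ)

lemma partialSum_zero : partialSum c 0 = 0 := by
  simp [partialSum]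

lemma partialSum_self : partialSum c n = ∑ i, c i := by
  simp [partialSum]

lemma partialSum_mono : Monotone (partialSum c) := fun _ _ hkl =>
  sum_le_sum_of_subset (monotone_filter_right _ fun _ _ hj => lt_of_lt_of_le hj hkl)

lemma partialSum_succ (i : Fin n) : partialSum c (i + 1) = partialSum c i + c i := by
  have hfilter : univ.filter (fun j : Fin n => (j : ℕ) < i + 1)
      = insert i (univ.filter (fun j : Fin n => (j : ℕ) < i)) := by
    ext j
    simp [le_iff_eq_or_lt, Fin.val_inj]
  rw [partialSum, hfilter, sum_insert (by simp), add_comm, partialSum]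

lemma sum_filter_lt_eq_partialSum (i : Fin n) :
    ∑ j ∈ univ.filter (· < i), c j = partialSum c i := by
  simp only [partialSum, Fin.lt_def]

lemma sum_filter_le_eq_partialSum (i : Fin n) :
    ∑ j ∈ univ.filter (· ≤ i), c j = partialSum c (i + 1) := by
  simp only [partialSum, Fin.le_iff_val_le_val, Nat.lt_succ_iff]

lemma sum_sub_partialSum_eq {g : ℕ → ℕ} (hg : Monotone g) :
    ∑ i : Fin n, (g (partialSum c (i + 1)) - g (partialSum c i)) = g (∑ i, c i) - g 0 := by
  rw [Fin.sum_univ_eq_sum_range (fun k => g (partialSum c (k + 1)) - g (partialSum c k)),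
    ← partialSum_self, ← partialSum_zero c]
  exact sum_range_tsub (f := g ∘ partialSum c) (hg.comp (partialSum_mono c)) n

end partialSum

section sortPair

variable {n : ℕ} (u v : Fin n →₀ ℕ)

lemma sortPair_fst_apply (i : Fin n) :
    (sortPair u v).1 i = (partialSum (fun j => u j + v j) (i + 1) + 1) / 2
      - (partialSum (fun j => u j + v j) i + 1) / 2 := by
  simp only [sortPair, Finsupp.coe_equivFunOnFinite_symm, sum_filter_le_eq_partialSum,
    sum_filter_lt_eq_partialSum]

lemma sortPair_snd_apply (i : Fin n) :
    (sortPair u v).2 i = partialSum (fun j => u j + v j) (i + 1) / 2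
      - partialSum (fun j => u j + v j) i / 2 := by
  simp only [sortPair, Finsupp.coe_equivFunOnFinite_symm, sum_filter_le_eq_partialSum,
    sum_filter_lt_eq_partialSum]

lemma sum_sortPair_fst : ∑ i, (sortPair u v).1 i = (∑ i, (u i + v i) + 1) / 2 := by
  simp only [sortPair_fst_apply]
  rw [sum_sub_partialSum_eq _ (g := fun k => (k + 1) / 2)
    fun _ _ h => Nat.div_le_div_right (Nat.add_le_add_right h 1)]
  simp

lemma sum_sortPair_snd : ∑ i, (sortPair u v).2 i = (∑ i, (u i + v i)) / 2 := by
  simp only [sortPair_snd_apply]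
  rw [sum_sub_partialSum_eq _ (g := fun k => k / 2) fun _ _ h => Nat.div_le_div_right h]
  simp

lemma sortPair_fst_apply_le (i : Fin n) : (sortPair u v).1 i ≤ (u i + v i + 1) / 2 := by
  rw [sortPair_fst_apply, partialSum_succ]
  omega

lemma sortPair_snd_apply_le (i : Fin n) : (sortPair u v).2 i ≤ (u i + v i + 1) / 2 := by
  rw [sortPair_snd_apply, partialSum_succ]
  omega

end sortPair

theorem stmt5_general {n d : ℕ} (a : Fin n → ℕ) :
    ∀ u ∈ {b : Fin n →₀ ℕ | (∑ i, b i) = d ∧ ∀ i, b i ≤ a i},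
    ∀ v ∈ {b : Fin n →₀ ℕ | (∑ i, b i) = d ∧ ∀ i, b i ≤ a i},
      (sortPair u v).1 ∈ {b : Fin n →₀ ℕ | (∑ i, b i) = d ∧ ∀ i, b i ≤ a i} ∧
      (sortPair u v).2 ∈ {b : Fin n →₀ ℕ | (∑ i, b i) = d ∧ ∀ i, b i ≤ a i} := by
  rintro u ⟨hu_sum, hu_le⟩ v ⟨hv_sum, hv_le⟩
  have hsum : ∑ i, (u i + v i) = 2 * d := by
    rw [sum_add_distrib, hu_sum, hv_sum, two_mul]
  have hle (i : Fin n) : (u i + v i + 1) / 2 ≤ a i := by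
    have := hu_le i
    have := hv_le i
    omega
  refine ⟨⟨?_, fun i => (sortPair_fst_apply_le u v i).trans (hle i)⟩,
    ⟨?_, fun i => (sortPair_snd_apply_le u v i).trans (hle i)⟩⟩
  · rw [sum_sortPair_fst, hsum]
    omega
  · rw [sum_sortPair_snd, hsum]
    omega

/-- For `n ≥ 1`, `d ≥ 0` and an integer vector `a` with
`a_1 ≥ a_2 ≥ … ≥ a_n ≥ 0`, the Veronese type set
`A = { x^b : Σ b_i = d, b_i ≤ a_i for all i }` is sortable: for all `u, v ∈ A`,
`sort(u, v) ∈ A × A`. -/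
theorem stmt5 {n d : ℕ} (hn : 1 ≤ n) (a : Fin n → ℕ)
    (ha : ∀ i j : Fin n, i ≤ j → a j ≤ a i) :
    ∀ u ∈ {b : Fin n →₀ ℕ | (∑ i, b i) = d ∧ ∀ i, b i ≤ a i},
    ∀ v ∈ {b : Fin n →₀ ℕ | (∑ i, b i) = d ∧ ∀ i, b i ≤ a i},
      (sortPair u v).1 ∈ {b : Fin n →₀ ℕ | (∑ i, b i) = d ∧ ∀ i, b i ≤ a i} ∧
      (sortPair u v).2 ∈ {b : Fin n →₀ ℕ | (∑ i, b i) = d ∧ ∀ i, b i ≤ a i} :=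
  stmt5_general a
end
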